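/- Let c > 0, α ∈ ℝ, λ > 0, and let x be the unique solution of the memory ODE with kernel M(t) = c·e^{αt} and parameter λ. Then for any t₁, t₂ > 0 with 0 < t₂ − t₁ < π/√c, it is not the case that both x(t₁) = 0 and x(t₂) = 0. -/

import Mathlib

noncomputable section

/-- `MemSol M lam x x'` says `x` is a solution on `[0,∞)` of the memory ODE
`x'(t) + lam·x(t) + ∫₀ᵗ M(t−s)·x(s) ds = 0`, `x(0)=1`, with continuous
derivative `x'` on `[0,∞)` (i.e. `x` is continuously differentiable there). -/
def MemSol (M : ℝ → ℝ) (lam : ℝ) (x x' : ℝ → ℝ) : Prop :=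
  x 0 = 1 ∧ ContinuousOn x' (Set.Ici 0) ∧
    (∀ t ∈ Set.Ici (0 : ℝ), HasDerivWithinAt x (x' t) (Set.Ici 0) t) ∧
    (∀ t ∈ Set.Ici (0 : ℝ), x' t + lam * x t + ∫ s in (0:ℝ)..t, M (t - s) * x s = 0)

/-!
Because the kernel is exponential, differentiating the equation turns it into the constant
coefficient ODE `x'' + (λ - α) x' + (c - α λ) x = 0` on `(0, ∞)`. By uniqueness for this ODE, a
solution vanishing at `t₁` is `x'(t₁)` times the damped sine `e^{-(λ-α)(t-t₁)/2} ψ(t - t₁)` with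
`ψ(s) = sin(√q s)/√q` (or its `sinh`/linear analogue for `q ≤ 0`), where
`q = c - (λ + α)²/4 ≤ c`. Then `ψ > 0` on `(0, π/√c)`, and `x(0) = 1` rules out `x'(t₁) = 0`.
-/

open Set Real Filter Topology intervalIntegral

def companion (B K : ℝ) : ℝ × ℝ →L[ℝ] ℝ × ℝ :=
  (ContinuousLinearMap.snd ℝ ℝ ℝ).prod
    (-B • ContinuousLinearMap.snd ℝ ℝ ℝ - K • ContinuousLinearMap.fst ℝ ℝ ℝ)

@[simp] lemma companion_apply (B K : ℝ) (p : ℝ × ℝ) :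
    companion B K p = (p.2, -B * p.2 - K * p.1) := by
  simp [companion]

theorem eqOn_of_secondOrderLinear {B K a b t₀ : ℝ} {y y' z z' : ℝ → ℝ}
    (ht₀ : t₀ ∈ Ioo a b)
    (hy : ContinuousOn y (Icc a b)) (hy' : ContinuousOn y' (Icc a b))
    (hdy : ∀ t ∈ Ioo a b, HasDerivAt y (y' t) t)
    (hdy' : ∀ t ∈ Ioo a b, HasDerivAt y' (-B * y' t - K * y t) t)
    (hz : ContinuousOn z (Icc a b)) (hz' : ContinuousOn z' (Icc a b))
    (hdz : ∀ t ∈ Ioo a b, HasDerivAt z (z' t) t)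
    (hdz' : ∀ t ∈ Ioo a b, HasDerivAt z' (-B * z' t - K * z t) t)
    (h : y t₀ = z t₀) (h' : y' t₀ = z' t₀) :
    EqOn y z (Icc a b) := fun t ht =>
  congrArg Prod.fst <| ODE_solution_unique_of_mem_Icc (v := fun _ => companion B K)
    (s := fun _ => univ) (fun _ _ => (companion B K).lipschitz.lipschitzOnWith) ht₀
    (hy.prodMk hy') (fun t ht => by simpa using (hdy t ht).prodMk (hdy' t ht))
    (fun _ _ => mem_univ _)
    (hz.prodMk hz') (fun t ht => by simpa using (hdz t ht).prodMk (hdz' t ht))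
    (fun _ _ => mem_univ _) (Prod.ext h h') ht

/-- `oscSin q` solves `u'' = -q u`, `u 0 = 0`, `u' 0 = 1`, and `oscCos q` is its derivative. -/
def oscSin (q s : ℝ) : ℝ :=
  if 0 < q then sin (√q * s) / √q
  else if q < 0 then sinh (√(-q) * s) / √(-q)
  else s

def oscCos (q s : ℝ) : ℝ :=
  if 0 < q then cos (√q * s)
  else if q < 0 then cosh (√(-q) * s)
  else 1

@[simp] lemma oscSin_zero (q : ℝ) : oscSin q 0 = 0 := by
  unfold oscSin; split_ifs <;> simp

@[simp] lemma oscCos_zero (q : ℝ) : oscCos q 0 = 1 := by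
  unfold oscCos; split_ifs <;> simp

lemma hasDerivAt_oscSin (q s : ℝ) : HasDerivAt (oscSin q) (oscCos q s) s := by
  unfold oscSin oscCos
  split_ifs with hpos hneg
  · have hr : √q ≠ 0 := (sqrt_pos.2 hpos).ne'
    simpa [hr] using ((hasDerivAt_id s).const_mul √q).sin.div_const √q
  · have hr : √(-q) ≠ 0 := (sqrt_pos.2 (neg_pos.2 hneg)).ne'
    simpa [hr] using ((hasDerivAt_id s).const_mul √(-q)).sinh.div_const √(-q)
  · exact hasDerivAt_id s

lemma hasDerivAt_oscCos (q s : ℝ) : HasDerivAt (oscCos q) (-q * oscSin q s) s := by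
  unfold oscSin oscCos
  split_ifs with hpos hneg
  · have hr : √q ≠ 0 := (sqrt_pos.2 hpos).ne'
    convert ((hasDerivAt_id' s).const_mul √q).cos using 1
    field_simp
    rw [sq_sqrt hpos.le]
  · have hr : √(-q) ≠ 0 := (sqrt_pos.2 (neg_pos.2 hneg)).ne'
    convert ((hasDerivAt_id' s).const_mul √(-q)).cosh using 1
    field_simp
    rw [sq_sqrt (neg_pos.2 hneg).le]
    simp
  · obtain rfl : q = 0 := le_antisymm (not_lt.1 hpos) (not_lt.1 hneg)
    simpa using hasDerivAt_const s (1 : ℝ)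

lemma oscSin_pos {q c s : ℝ} (hqc : q ≤ c) (hs : 0 < s) (hsc : s < π / √c) :
    0 < oscSin q s := by
  unfold oscSin
  split_ifs with hpos hneg
  · have hc : 0 < √c := sqrt_pos.2 (hpos.trans_le hqc)
    refine div_pos (sin_pos_of_pos_of_lt_pi (by positivity) ?_) (sqrt_pos.2 hpos)
    calc √q * s ≤ √c * s := by gcongr
      _ < π := by rwa [lt_div_iff₀ hc, mul_comm] at hsc
  · have hr : 0 < √(-q) := sqrt_pos.2 (neg_pos.2 hneg)
    exact div_pos (sinh_pos_iff.2 (mul_pos hr hs)) hr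
  · exact hs

/-- `dampedSin B K` solves `u'' = -B u' - K u`, `u 0 = 0`, `u' 0 = 1`. -/
def dampedSin (B K s : ℝ) : ℝ :=
  exp (-(B / 2) * s) * oscSin (K - B ^ 2 / 4) s

def dampedSinDeriv (B K s : ℝ) : ℝ :=
  exp (-(B / 2) * s) * (oscCos (K - B ^ 2 / 4) s - B / 2 * oscSin (K - B ^ 2 / 4) s)

@[simp] lemma dampedSin_zero (B K : ℝ) : dampedSin B K 0 = 0 := by simp [dampedSin]

@[simp] lemma dampedSinDeriv_zero (B K : ℝ) : dampedSinDeriv B K 0 = 1 := by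
  simp [dampedSinDeriv]

lemma hasDerivAt_exp_mul (a s : ℝ) : HasDerivAt (fun s => exp (a * s)) (exp (a * s) * a) s := by
  simpa using ((hasDerivAt_id' s).const_mul a).exp

lemma hasDerivAt_dampedSin (B K s : ℝ) :
    HasDerivAt (dampedSin B K) (dampedSinDeriv B K s) s := by
  refine ((hasDerivAt_exp_mul (-(B / 2)) s).fun_mul (hasDerivAt_oscSin _ s)).congr_deriv ?_
  simp only [dampedSinDeriv]
  ring

lemma hasDerivAt_dampedSinDeriv (B K s : ℝ) :
    HasDerivAt (dampedSinDeriv B K) (-B * dampedSinDeriv B K s - K * dampedSin B K s) s := by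
  refine ((hasDerivAt_exp_mul (-(B / 2)) s).fun_mul ((hasDerivAt_oscCos _ s).fun_sub
    ((hasDerivAt_oscSin _ s).const_mul (B / 2)))).congr_deriv ?_
  simp only [dampedSin, dampedSinDeriv]
  ring

lemma dampedSin_pos {B K c s : ℝ} (h : K - B ^ 2 / 4 ≤ c) (hs : 0 < s) (hsc : s < π / √c) :
    0 < dampedSin B K s :=
  mul_pos (exp_pos _) (oscSin_pos h hs hsc)

theorem eqOn_mul_dampedSin_of_secondOrderLinear {B K a b t₀ : ℝ} {y y' : ℝ → ℝ}
    (ht₀ : t₀ ∈ Ioo a b)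
    (hy : ContinuousOn y (Icc a b)) (hy' : ContinuousOn y' (Icc a b))
    (hdy : ∀ t ∈ Ioo a b, HasDerivAt y (y' t) t)
    (hdy' : ∀ t ∈ Ioo a b, HasDerivAt y' (-B * y' t - K * y t) t) (h : y t₀ = 0) :
    EqOn y (fun t => y' t₀ * dampedSin B K (t - t₀)) (Icc a b) := by
  have hz : ∀ t, HasDerivAt (fun t => y' t₀ * dampedSin B K (t - t₀))
      (y' t₀ * dampedSinDeriv B K (t - t₀)) t := fun t =>
    ((hasDerivAt_dampedSin B K (t - t₀)).comp_sub_const t t₀).const_mul _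
  have hz' : ∀ t, HasDerivAt (fun t => y' t₀ * dampedSinDeriv B K (t - t₀))
      (-B * (y' t₀ * dampedSinDeriv B K (t - t₀)) - K * (y' t₀ * dampedSin B K (t - t₀))) t :=
    fun t => (((hasDerivAt_dampedSinDeriv B K (t - t₀)).comp_sub_const t t₀).const_mul _)
      |>.congr_deriv (by ring)
  exact eqOn_of_secondOrderLinear ht₀ hy hy' hdy hdy'
    (HasDerivAt.continuousOn fun t _ => hz t) (HasDerivAt.continuousOn fun t _ => hz' t)
    (fun t _ => hz t) (fun t _ => hz' t) (by simp [h]) (by simp)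

lemma hasDerivAt_integral_exp_kernel (c α : ℝ) {x : ℝ → ℝ} (hx : ContinuousOn x (Ici 0))
    {t : ℝ} (ht : 0 < t) :
    HasDerivAt (fun t => ∫ s in (0 : ℝ)..t, c * exp (α * (t - s)) * x s)
      (α * (∫ s in (0 : ℝ)..t, c * exp (α * (t - s)) * x s) + c * x t) t := by
  set f : ℝ → ℝ := fun s => exp (-α * s) * x s with hf
  have hfc : ContinuousOn f (Ici 0) :=
    (continuous_exp.comp (continuous_const_mul _)).continuousOn.mul hx
  have hsplit : ∀ t, ∫ s in (0 : ℝ)..t, c * exp (α * (t - s)) * x s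
      = c * exp (α * t) * ∫ s in (0 : ℝ)..t, f s := fun t => by
    rw [← integral_const_mul]
    refine integral_congr fun s _ => ?_
    rw [hf, mul_sub, sub_eq_add_neg, exp_add, neg_mul_eq_neg_mul]
    ring
  have hF : HasDerivAt (fun t => ∫ s in (0 : ℝ)..t, f s) (f t) t :=
    integral_hasDerivAt_right
      ((hfc.mono Icc_subset_Ici_self).intervalIntegrable_of_Icc ht.le)
      ((hfc.mono Ioi_subset_Ici_self).stronglyMeasurableAtFilter isOpen_Ioi t ht)
      (hfc.continuousAt (Ici_mem_nhds ht))
  rw [hsplit t, funext hsplit]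
  refine (((hasDerivAt_exp_mul α t).const_mul c).fun_mul hF).congr_deriv ?_
  have : exp (α * t) * exp (-α * t) = 1 := by rw [← exp_add]; simp
  simp only [hf]
  linear_combination (c * x t) * this

lemma MemSol.hasDerivAt {M : ℝ → ℝ} {lam : ℝ} {x x' : ℝ → ℝ} (hx : MemSol M lam x x')
    {t : ℝ} (ht : 0 < t) : HasDerivAt x (x' t) t :=
  (hx.2.2.1 t ht.le).hasDerivAt (Ici_mem_nhds ht)

lemma MemSol.continuousOn {M : ℝ → ℝ} {lam : ℝ} {x x' : ℝ → ℝ} (hx : MemSol M lam x x') :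
    ContinuousOn x (Ici 0) :=
  fun t ht => (hx.2.2.1 t ht).continuousWithinAt

lemma MemSol.hasDerivAt_deriv_of_exp_kernel {c α lam : ℝ} {x x' : ℝ → ℝ}
    (hx : MemSol (fun t => c * exp (α * t)) lam x x') {t : ℝ} (ht : 0 < t) :
    HasDerivAt x' (-(lam - α) * x' t - (c - α * lam) * x t) t := by
  have heq := hx.2.2.2
  beta_reduce at heq
  have hx' : x' =ᶠ[𝓝 t]
      fun t => -lam * x t - ∫ s in (0 : ℝ)..t, c * exp (α * (t - s)) * x s := by
    filter_upwards [Ici_mem_nhds ht] with u hu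
    linarith [heq u hu]
  refine (((hx.hasDerivAt ht).const_mul (-lam)).sub
    (hasDerivAt_integral_exp_kernel c α hx.continuousOn ht)).congr_of_eventuallyEq hx'
    |>.congr_deriv ?_
  linear_combination -α * heq t ht.le

theorem stmt17_general (c α lam : ℝ)
    (x x' : ℝ → ℝ) (hx : MemSol (fun t => c * Real.exp (α * t)) lam x x') :
    ∀ t₁ t₂ : ℝ, 0 < t₁ → 0 < t₂ → 0 < t₂ - t₁ → t₂ - t₁ < Real.pi / Real.sqrt c →
      ¬(x t₁ = 0 ∧ x t₂ = 0) := by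
  rintro t₁ t₂ ht₁ - hT hTc ⟨hx₁, hx₂⟩
  have hsol : EqOn x (fun t => x' t₁ * dampedSin (lam - α) (c - α * lam) (t - t₁)) (Icc 0 t₂) :=
    eqOn_mul_dampedSin_of_secondOrderLinear ⟨ht₁, by linarith⟩
      (hx.continuousOn.mono Icc_subset_Ici_self) (hx.2.1.mono Icc_subset_Ici_self)
      (fun t ht => hx.hasDerivAt ht.1) (fun t ht => hx.hasDerivAt_deriv_of_exp_kernel ht.1) hx₁
  have hx'₁ : x' t₁ ≠ 0 := by
    intro h
    simpa [h, hx.1] using hsol (left_mem_Icc.2 (by linarith))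
  have hq : (c - α * lam) - (lam - α) ^ 2 / 4 ≤ c := by nlinarith [sq_nonneg (lam + α)]
  have hsol₂ := hsol (right_mem_Icc.2 (by linarith))
  rw [hx₂] at hsol₂
  exact mul_ne_zero hx'₁ (dampedSin_pos hq hT hTc).ne' hsol₂.symm

/-- For the kernel `c·e^{αt}` with `c > 0` and `λ > 0`, two time instants at distance less
than `π/√c` cannot both be zeros of the solution. -/
theorem stmt17 (c α lam : ℝ) (hc : 0 < c) (hlam : 0 < lam)
    (x x' : ℝ → ℝ) (hx : MemSol (fun t => c * Real.exp (α * t)) lam x x') :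
    ∀ t₁ t₂ : ℝ, 0 < t₁ → 0 < t₂ → 0 < t₂ - t₁ → t₂ - t₁ < Real.pi / Real.sqrt c →
      ¬(x t₁ = 0 ∧ x t₂ = 0) :=
  stmt17_general c α lam x x' hx
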